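/- If a single-intervention process tensor has classical memory, i.e. T[A] = Σᵢ Φᵢ(A(Iᵢ(ρ₀))) where {Iᵢ} is a quantum instrument (each Iᵢ completely positive, Σᵢ Iᵢ trace preserving) and each Φᵢ is a CPT map, then its Choi state is separable across the cut between the first time segment (initial state and intervention input) and the second time segment (intervention output and final state): χ[T] = Σᵢ pᵢ T₁,ᵢ ⊗ T₂,ᵢ with density matrices T₁,ᵢ, T₂,ᵢ and probabilities pᵢ. -/

import Mathlib

open Matrix
open scoped Kronecker Classical ComplexOrder

noncomputable section

/-- A density matrix: positive semidefinite with unit trace. -/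
def IsDensity {N : Type*} [Fintype N] (ρ : Matrix N N ℂ) : Prop :=
  ρ.PosSemidef ∧ ρ.trace = 1

/-- Outer product `|ψ⟩⟨ψ|`. -/
def outer {N : Type*} (ψ : N → ℂ) : Matrix N N ℂ :=
  Matrix.of fun i j => ψ i * star (ψ j)

/-- Squared norm of a vector. -/
def vnormSq {N : Type*} [Fintype N] (ψ : N → ℂ) : ℝ := ∑ x, ‖ψ x‖ ^ 2

/-- Partial transpose with respect to the first tensor factor. -/
def pt₁ {m n : Type*} (ρ : Matrix (m × n) (m × n) ℂ) : Matrix (m × n) (m × n) ℂ :=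
  Matrix.of fun p q => ρ (q.1, p.2) (p.1, q.2)

/-- Partial transpose with respect to the second tensor factor. -/
def pt₂ {m n : Type*} (ρ : Matrix (m × n) (m × n) ℂ) : Matrix (m × n) (m × n) ℂ :=
  Matrix.of fun p q => ρ (p.1, q.2) (q.1, p.2)

/-- Partial trace over the first tensor factor. -/
def ptr₁ {m n : Type*} [Fintype m] (ρ : Matrix (m × n) (m × n) ℂ) : Matrix n n ℂ :=
  Matrix.of fun j l => ∑ i, ρ (i, j) (i, l)

/-- Partial trace over the second tensor factor. -/
def ptr₂ {m n : Type*} [Fintype n] (ρ : Matrix (m × n) (m × n) ℂ) : Matrix m m ℂ :=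
  Matrix.of fun i k => ∑ j, ρ (i, j) (k, j)

/-- Trace norm (sum of singular values): `‖A‖₁ = tr √(AᴴA)`. -/
def traceNorm {N : Type*} [Fintype N] [DecidableEq N] (A : Matrix N N ℂ) : ℝ :=
  (((Matrix.posSemidef_conjTranspose_mul_self A).1.eigenvectorUnitary : Matrix N N ℂ) *
    diagonal (((↑) : ℝ → ℂ) ∘ (√·) ∘ (Matrix.posSemidef_conjTranspose_mul_self A).1.eigenvalues) *
    (star ((Matrix.posSemidef_conjTranspose_mul_self A).1.eigenvectorUnitary : Matrix N N ℂ))).trace.re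

/-- Purity `tr ρ²` (real part). -/
def purity {N : Type*} [Fintype N] (ρ : Matrix N N ℂ) : ℝ := ((ρ * ρ).trace).re

/-- Separability of a bipartite density matrix. -/
def Separable {m n : Type*} [Fintype m] [Fintype n]
    (ρ : Matrix (m × n) (m × n) ℂ) : Prop :=
  ∃ (k : ℕ) (p : Fin k → ℝ) (σ : Fin k → Matrix m m ℂ) (τ : Fin k → Matrix n n ℂ),
    (∀ i, 0 ≤ p i) ∧ (∑ i, p i = 1) ∧ (∀ i, IsDensity (σ i)) ∧ (∀ i, IsDensity (τ i)) ∧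
    ρ = ∑ i, (p i : ℂ) • (σ i ⊗ₖ τ i)

/-- Extension `E ⊗ id` of a map on the first factor to a bipartite space. -/
def tensExtA {s n : Type*} (E : Matrix s s ℂ → Matrix s s ℂ)
    (X : Matrix (s × n) (s × n) ℂ) : Matrix (s × n) (s × n) ℂ :=
  Matrix.of fun p q => E (Matrix.of fun i k => X (i, p.2) (k, q.2)) p.1 q.1

/-- Extension `id ⊗ A` of a map on the second factor to a bipartite space. -/
def tensExtSys {e s : Type*} (A : Matrix s s ℂ → Matrix s s ℂ)
    (X : Matrix (e × s) (e × s) ℂ) : Matrix (e × s) (e × s) ℂ :=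
  Matrix.of fun p q => A (Matrix.of fun i k => X (p.1, i) (q.1, k)) p.2 q.2

/-- Complete positivity: `E ⊗ id_n` maps PSD matrices to PSD matrices for every `n`. -/
def IsCP {s : Type*} [Fintype s] (E : Matrix s s ℂ → Matrix s s ℂ) : Prop :=
  ∀ (n : ℕ) (X : Matrix (s × Fin n) (s × Fin n) ℂ), X.PosSemidef → (tensExtA E X).PosSemidef

/-- Trace preservation. -/
def IsTP {s : Type*} [Fintype s] (E : Matrix s s ℂ → Matrix s s ℂ) : Prop :=
  ∀ X, (E X).trace = X.trace

/-- The maximally entangled unit vector `|Ψ⁺⟩ = (1/√d) Σᵢ |i⟩⊗|i⟩`. -/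
def maxEntVec (d : ℕ) : Fin d × Fin d → ℂ :=
  fun p => if p.1 = p.2 then (((Real.sqrt d)⁻¹ : ℝ) : ℂ) else 0

/-- The Choi state `χ[E] = (E ⊗ id)(|Ψ⁺⟩⟨Ψ⁺|)` of a map `E`. -/
def ChoiMap {d : ℕ} (E : Matrix (Fin d) (Fin d) ℂ → Matrix (Fin d) (Fin d) ℂ) :
    Matrix (Fin d × Fin d) (Fin d × Fin d) ℂ :=
  tensExtA E (outer (maxEntVec d))

/-- Choi state of a single-intervention process tensor `T`, viewed as a function of the
initial system state and the intervention (a CP map). The first index pair is the first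
time segment (intervention input leg, initial state leg), the second pair is the second
time segment (final state leg, intervention output leg). It is obtained by letting `T`
act on halves of maximally entangled pairs, i.e. on matrix units with `1/d` weights. -/
def ChoiPT {d : ℕ}
    (T : Matrix (Fin d) (Fin d) ℂ →
      (Matrix (Fin d) (Fin d) ℂ → Matrix (Fin d) (Fin d) ℂ) → Matrix (Fin d) (Fin d) ℂ) :
    Matrix ((Fin d × Fin d) × (Fin d × Fin d)) ((Fin d × Fin d) × (Fin d × Fin d)) ℂ :=
  Matrix.of fun p q => (d : ℂ)⁻¹ * (d : ℂ)⁻¹ *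
    (T (Matrix.single p.1.2 q.1.2 1)
       (fun ρ => ρ p.1.1 q.1.1 • Matrix.single p.2.2 q.2.2 1)) p.2.1 q.2.1

/-- A single-intervention process tensor has classical memory if it is a composition of
conditioned instruments: `T[ρ, A] = Σᵢ Φᵢ(A(Iᵢ(ρ)))` with `{Iᵢ}` a quantum instrument
(each `Iᵢ` CP, their sum trace preserving) and each `Φᵢ` a CPT map. -/
def HasClassicalMemory {d : ℕ}
    (T : Matrix (Fin d) (Fin d) ℂ →
      (Matrix (Fin d) (Fin d) ℂ → Matrix (Fin d) (Fin d) ℂ) → Matrix (Fin d) (Fin d) ℂ) :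
    Prop :=
  ∃ (k : ℕ) (I Φ : Fin k → (Matrix (Fin d) (Fin d) ℂ → Matrix (Fin d) (Fin d) ℂ)),
    (∀ i, IsLinearMap ℂ (I i)) ∧ (∀ i, IsCP (I i)) ∧ IsTP (fun ρ => ∑ i, I i ρ) ∧
    (∀ i, IsLinearMap ℂ (Φ i)) ∧ (∀ i, IsCP (Φ i)) ∧ (∀ i, IsTP (Φ i)) ∧
    (∀ ρ A, T ρ A = ∑ i, Φ i (A (I i ρ)))

/-- Action of a Kraus operator on the first factor of a bipartite vector: `(L ⊗ I)ψ`. -/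
def lact {m n : Type*} [Fintype m] (L : Matrix m m ℂ) (ψ : m × n → ℂ) : m × n → ℂ :=
  fun p => ∑ i, L p.1 i * ψ (i, p.2)

/-- Concurrence of a pure bipartite state: `C(ψ) = √(2(1 − tr((tr₂|ψ⟩⟨ψ|)²)))`. -/
def concPure {m n : Type*} [Fintype m] [Fintype n] (ψ : m × n → ℂ) : ℝ :=
  Real.sqrt (2 * (1 - purity (ptr₂ (outer ψ))))

/-- The set of average values `Σₖ pₖ f(ψₖ)` over all pure-state decompositions of `ρ`. -/
def decompAvgs {m n : Type*} [Fintype m] [Fintype n]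
    (f : (m × n → ℂ) → ℝ) (ρ : Matrix (m × n) (m × n) ℂ) : Set ℝ :=
  { r | ∃ (k : ℕ) (p : Fin k → ℝ) (ψ : Fin k → m × n → ℂ),
      (∀ i, 0 < p i) ∧ (∑ i, p i = 1) ∧ (∀ i, vnormSq (ψ i) = 1) ∧
      (ρ = ∑ i, (p i : ℂ) • outer (ψ i)) ∧ r = ∑ i, p i * f (ψ i) }

/-- An entanglement monotone: a nonnegative function of pure bipartite states whose
average does not increase under local CP operations (given by Kraus operators) on the
system (first) factor. -/
def IsEntMonotone {m n : Type*} [Fintype m] [Fintype n] (f : (m × n → ℂ) → ℝ) : Prop :=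
  (∀ ψ, 0 ≤ f ψ) ∧
  ∀ (k : ℕ) (L : Fin k → Matrix m m ℂ), (∑ j, (L j)ᴴ * L j) = 1 →
    ∀ ψ : m × n → ℂ, vnormSq ψ = 1 →
      (∑ j, if vnormSq (lact (L j) ψ) = 0 then 0 else
        vnormSq (lact (L j) ψ) *
          f (fun x => (((Real.sqrt (vnormSq (lact (L j) ψ)))⁻¹ : ℝ) : ℂ) * lact (L j) ψ x))
        ≤ f ψ

end

/-!
With classical memory the Choi state of `T` factorises as `Σᵢ χ[Iᵢ] ⊗ χ[Φᵢ]`: branch `i` of the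
instrument only touches the first time segment and `Φᵢ` only the second. Each `χ[Φᵢ]` is a state
because `Φᵢ` is CPTP, and the `χ[Iᵢ]` are positive with `Σᵢ tr χ[Iᵢ] = tr χ[Σᵢ Iᵢ] = 1`, so
normalising `χ[Iᵢ]` by `pᵢ = tr χ[Iᵢ]` gives the separable decomposition.
-/

lemma posSemidef_outer {N : Type*} [Fintype N] (ψ : N → ℂ) : (outer ψ).PosSemidef :=
  Matrix.posSemidef_vecMulVec_self_star ψ

lemma choiMap_apply {d : ℕ} (E : Matrix (Fin d) (Fin d) ℂ → Matrix (Fin d) (Fin d) ℂ)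
    (a b c e : Fin d) :
    ChoiMap E (a, b) (c, e) = E ((d : ℂ)⁻¹ • Matrix.single b e 1) a c := by
  show E _ a c = _
  congr 2
  ext i k
  have hsqrt : ((Real.sqrt d : ℂ))⁻¹ * (Real.sqrt d : ℂ)⁻¹ = (d : ℂ)⁻¹ := by
    rw [← mul_inv, ← Complex.ofReal_mul, Real.mul_self_sqrt d.cast_nonneg, Complex.ofReal_natCast]
  rcases eq_or_ne i b with rfl | hib <;> rcases eq_or_ne k e with rfl | hke <;>
    simp [outer, maxEntVec, Complex.conj_ofReal, Ne.symm, *]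

lemma choiMap_apply_of_isLinearMap {d : ℕ}
    {E : Matrix (Fin d) (Fin d) ℂ → Matrix (Fin d) (Fin d) ℂ} (hE : IsLinearMap ℂ E)
    (a b c e : Fin d) : ChoiMap E (a, b) (c, e) = (d : ℂ)⁻¹ * E (Matrix.single b e 1) a c := by
  rw [choiMap_apply, hE.map_smul, Matrix.smul_apply, smul_eq_mul]

lemma IsCP.posSemidef_choiMap {d : ℕ} {E : Matrix (Fin d) (Fin d) ℂ → Matrix (Fin d) (Fin d) ℂ}
    (hE : IsCP E) : (ChoiMap E).PosSemidef :=
  hE d _ (posSemidef_outer _)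

lemma IsTP.trace_choiMap {d : ℕ} (hd : d ≠ 0)
    {E : Matrix (Fin d) (Fin d) ℂ → Matrix (Fin d) (Fin d) ℂ} (hE : IsTP E) :
    (ChoiMap E).trace = 1 := by
  have hblock : ∀ b, ∑ a, ChoiMap E (a, b) (a, b) = (d : ℂ)⁻¹ := fun b => by
    have := hE ((d : ℂ)⁻¹ • Matrix.single b b 1)
    rw [Matrix.trace_smul, Matrix.trace_single_eq_same, smul_eq_mul, mul_one] at this
    simpa only [choiMap_apply, Matrix.trace, Matrix.diag] using this
  rw [Matrix.trace, Fintype.sum_prod_type_right]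
  simp [Matrix.diag, hblock, hd]

lemma choiMap_sum {d k : ℕ} (E : Fin k → Matrix (Fin d) (Fin d) ℂ → Matrix (Fin d) (Fin d) ℂ) :
    ChoiMap (fun ρ => ∑ i, E i ρ) = ∑ i, ChoiMap (E i) := by
  ext p q
  simp [ChoiMap, tensExtA, Matrix.sum_apply]

lemma Matrix.PosSemidef.exists_isDensity_smul_eq {N : Type*} [Fintype N] [Nonempty N]
    {A : Matrix N N ℂ} (hA : A.PosSemidef) :
    ∃ σ, IsDensity σ ∧ A = (A.trace.re : ℂ) • σ := by
  by_cases h : A.trace = 0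
  · refine ⟨(Fintype.card N : ℂ)⁻¹ • 1, ⟨Matrix.PosSemidef.one.smul (by positivity), by simp⟩, ?_⟩
    simp [hA.trace_eq_zero_iff.1 h]
  · refine ⟨A.trace⁻¹ • A, ⟨hA.smul (inv_nonneg.2 hA.trace_nonneg), by simp [h]⟩, ?_⟩
    rw [← Complex.eq_re_of_ofReal_le (r := 0) (by simpa using hA.trace_nonneg), smul_smul,
      mul_inv_cancel₀ h, one_smul]

lemma separable_sum_kronecker {m n : Type*} [Fintype m] [Fintype n] [Nonempty m] {k : ℕ}
    (A : Fin k → Matrix m m ℂ) (B : Fin k → Matrix n n ℂ) (hA : ∀ i, (A i).PosSemidef)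
    (hAtr : ∑ i, (A i).trace = 1) (hB : ∀ i, IsDensity (B i)) :
    Separable (∑ i, A i ⊗ₖ B i) := by
  choose σ hσ hAσ using fun i => (hA i).exists_isDensity_smul_eq
  refine ⟨k, fun i => (A i).trace.re, σ, B, fun i => (Complex.nonneg_iff.1 (hA i).trace_nonneg).1,
    by simpa [Complex.re_sum] using congrArg Complex.re hAtr, hσ, hB, ?_⟩
  refine Finset.sum_congr rfl fun i _ => ?_
  rw [← Matrix.smul_kronecker, ← hAσ i]

lemma choiPT_eq_sum_kronecker {d k : ℕ}
    {T : Matrix (Fin d) (Fin d) ℂ →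
      (Matrix (Fin d) (Fin d) ℂ → Matrix (Fin d) (Fin d) ℂ) → Matrix (Fin d) (Fin d) ℂ}
    {I Φ : Fin k → (Matrix (Fin d) (Fin d) ℂ → Matrix (Fin d) (Fin d) ℂ)}
    (hIlin : ∀ i, IsLinearMap ℂ (I i)) (hΦlin : ∀ i, IsLinearMap ℂ (Φ i))
    (hT : ∀ ρ A, T ρ A = ∑ i, Φ i (A (I i ρ))) :
    ChoiPT T = ∑ i, ChoiMap (I i) ⊗ₖ ChoiMap (Φ i) := by
  ext ⟨⟨a, b⟩, ⟨c, e⟩⟩ ⟨⟨a', b'⟩, ⟨c', e'⟩⟩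
  simp only [ChoiPT, Matrix.of_apply, hT, Matrix.sum_apply, Finset.mul_sum, (hΦlin _).map_smul,
    Matrix.kroneckerMap_apply, choiMap_apply_of_isLinearMap (hIlin _),
    choiMap_apply_of_isLinearMap (hΦlin _), Matrix.smul_apply, smul_eq_mul]
  exact Finset.sum_congr rfl fun i _ => by ring

/-- a single-intervention process tensor with classical memory,
`T[ρ, A] = Σᵢ Φᵢ(A(Iᵢ(ρ)))` with `{Iᵢ}` a quantum instrument and `Φᵢ` CPT maps, has a
separable Choi state across the cut between the two time segments. -/
theorem stmt9 {d : ℕ} (hd : 0 < d)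
    (T : Matrix (Fin d) (Fin d) ℂ →
      (Matrix (Fin d) (Fin d) ℂ → Matrix (Fin d) (Fin d) ℂ) → Matrix (Fin d) (Fin d) ℂ)
    (k : ℕ) (I Φ : Fin k → (Matrix (Fin d) (Fin d) ℂ → Matrix (Fin d) (Fin d) ℂ))
    (hIlin : ∀ i, IsLinearMap ℂ (I i)) (hIcp : ∀ i, IsCP (I i))
    (hItp : IsTP (fun ρ => ∑ i, I i ρ))
    (hΦlin : ∀ i, IsLinearMap ℂ (Φ i)) (hΦcp : ∀ i, IsCP (Φ i)) (hΦtp : ∀ i, IsTP (Φ i))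
    (hT : ∀ ρ A, T ρ A = ∑ i, Φ i (A (I i ρ))) :
    Separable (ChoiPT T) := by
  have : Nonempty (Fin d) := ⟨⟨0, hd⟩⟩
  have hItr : ∑ i, (ChoiMap (I i)).trace = 1 := by
    rw [← Matrix.trace_sum, ← choiMap_sum, hItp.trace_choiMap hd.ne']
  rw [choiPT_eq_sum_kronecker hIlin hΦlin hT]
  exact separable_sum_kronecker _ _ (fun i => (hIcp i).posSemidef_choiMap) hItr
    fun i => ⟨(hΦcp i).posSemidef_choiMap, (hΦtp i).trace_choiMap hd.ne'⟩
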